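/- arXiv:funct-an/9501007 — 2 statements merged into one kernel-verified Lean document; each statement's English description precedes it below -/
import Mathlib

section
/- Let A be a C*-algebra and M a left Hilbert A-module. Then M is self-dual if and only if the unit ball of M is complete with respect to the right *-strict topology. Moreover, the linear hull of the completion of the unit ball of M with respect to the right *-strict topology coincides with the A-dual Banach A-module M′ of M. -/
open Filter Topology

/-- A C*-algebra `A` is a W*-algebra if it possesses a Banach space predual,
i.e. it is isometrically isomorphic (as a complex normed space) to the dual
of some complex normed space. -/
def IsWStarAlgebra (A : Type*) [CStarAlgebra A] : Prop :=
  ∃ (X : Type) (_ : NormedAddCommGroup X) (_ : NormedSpace ℂ X),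
    Nonempty (A ≃ₗᵢ[ℂ] StrongDual ℂ X)

/-- A (left) Hilbert module structure over a C*-algebra `A` on a normed
`A`-module `M`:  an `A`-valued inner product which is `A`-linear in the first
variable, positive definite, conjugate-symmetric, and inducing the norm. -/
structure LeftHilbertModule (A : Type*) [CStarAlgebra A] (M : Type*)
    [NormedAddCommGroup M] [Module A M] where
  inner : M → M → A
  inner_add_left : ∀ x y z : M, inner (x + y) z = inner x z + inner y z
  inner_smul_left : ∀ (a : A) (x y : M), inner (a • x) y = a * inner x y
  star_inner : ∀ x y : M, star (inner x y) = inner y x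
  inner_self_nonneg : ∀ x : M, ∃ a : A, inner x x = star a * a
  eq_zero_of_inner_self : ∀ x : M, inner x x = 0 → x = 0
  norm_eq : ∀ x : M, ‖x‖ = Real.sqrt ‖inner x x‖

/-- A map between normed `A`-modules is a bounded `A`-module map if it is
additive, `A`-homogeneous and norm-bounded. -/
def IsBddModuleMap (A : Type*) [CStarAlgebra A] {M N : Type*}
    [NormedAddCommGroup M] [Module A M] [NormedAddCommGroup N] [Module A N]
    (φ : M → N) : Prop :=
  (∀ x y : M, φ (x + y) = φ x + φ y) ∧ (∀ (a : A) (x : M), φ (a • x) = a • φ x) ∧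
    ∃ C : ℝ, ∀ x : M, ‖φ x‖ ≤ C * ‖x‖

namespace LeftHilbertModule

variable {A : Type*} [CStarAlgebra A] {M : Type*} [NormedAddCommGroup M] [Module A M]

/-- The orthogonal complement of a subset of a Hilbert `A`-module. -/
def orth (h : LeftHilbertModule A M) (S : Set M) : Set M :=
  {y : M | ∀ s ∈ S, h.inner y s = 0}

lemma inner_zero_left (h : LeftHilbertModule A M) (s : M) : h.inner 0 s = 0 := by
  have := h.inner_add_left 0 0 s
  rw [add_zero] at this
  exact (left_eq_add.mp this)

/-- The orthogonal complement of a subset, as a submodule. -/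
def orthSubmodule (h : LeftHilbertModule A M) (S : Set M) : Submodule A M where
  carrier := h.orth S
  add_mem' := by
    intro y z hy hz s hs
    rw [h.inner_add_left, hy s hs, hz s hs, add_zero]
  zero_mem' := fun s _ => h.inner_zero_left s
  smul_mem' := by
    intro a y hy s hs
    rw [h.inner_smul_left, hy s hs, mul_zero]

/-- A subset `S` of a Hilbert `A`-module is an orthogonal direct summand if
every element of `M` decomposes as a sum of an element of `S` and an element of
`S^⊥`. -/
def IsOrthoSummand (h : LeftHilbertModule A M) (S : Set M) : Prop :=
  ∀ x : M, ∃ u ∈ S, ∃ v ∈ h.orth S, x = u + v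

/-- Self-duality: every bounded `A`-linear map `M → A` is given by the inner
product with some element of `M`. -/
def SelfDual (h : LeftHilbertModule A M) : Prop :=
  ∀ r : M → A, IsBddModuleMap A r → ∃ x : M, ∀ y : M, r y = h.inner y x

/-- The restriction of a Hilbert `A`-module structure to a submodule. -/
def restrict (h : LeftHilbertModule A M) (N : Submodule A M) :
    LeftHilbertModule A N where
  inner x y := h.inner x y
  inner_add_left x y z := by
    show h.inner ((x + y : N) : M) z = _
    rw [Submodule.coe_add, h.inner_add_left]
  inner_smul_left a x y := by
    show h.inner ((a • x : N) : M) y = _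
    rw [Submodule.coe_smul, h.inner_smul_left]
  star_inner x y := h.star_inner x y
  inner_self_nonneg x := h.inner_self_nonneg x
  eq_zero_of_inner_self x hx := Subtype.ext (h.eq_zero_of_inner_self x hx)
  norm_eq x := h.norm_eq x

end LeftHilbertModule

/-- A unital C*-algebra as a (left) Hilbert module over itself, with the
standard inner product `⟨a, b⟩ = a * b*`. -/
noncomputable def selfModule (A : Type*) [CStarAlgebra A] : LeftHilbertModule A A where
  inner a b := a * star b
  inner_add_left x y z := add_mul x y (star z)
  inner_smul_left a x y := by show (a • x) * star y = a * (x * star y); rw [smul_eq_mul, mul_assoc]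
  star_inner x y := by rw [star_mul, star_star]
  inner_self_nonneg x := ⟨star x, by rw [star_star]⟩
  eq_zero_of_inner_self x hx := by
    have hx' : x * star x = 0 := hx
    have h1 : ‖x‖ * ‖x‖ = 0 := by rw [← CStarRing.norm_self_mul_star, hx', norm_zero]
    have h2 : ‖x‖ = 0 := by
      rcases mul_self_eq_zero.mp h1 with h
      exact h
    exact norm_eq_zero.mp h2
  norm_eq x := by
    show ‖x‖ = Real.sqrt ‖x * star x‖
    rw [CStarRing.norm_self_mul_star, Real.sqrt_mul_self (norm_nonneg x)]

/-- The kernel of a bounded `A`-module map, as a submodule. -/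
def kerSubmodule (A : Type*) [CStarAlgebra A] {M N : Type*}
    [NormedAddCommGroup M] [Module A M] [NormedAddCommGroup N] [Module A N]
    (φ : M → N) (hφ : IsBddModuleMap A φ) : Submodule A M where
  carrier := {x : M | φ x = 0}
  add_mem' := by
    intro y z hy hz
    show φ (y + z) = 0
    rw [hφ.1, hy, hz, add_zero]
  zero_mem' := by
    show φ 0 = 0
    have := hφ.1 0 0
    rw [add_zero] at this
    exact (left_eq_add.mp this)
  smul_mem' := by
    intro a y hy
    show φ (a • y) = 0
    rw [hφ.2.1, hy, smul_zero]

/-!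
Given a bounded `A`-linear functional `r` and finitely many vectors `vᵢ`, solve the regularised
Gram system `(G + e) d = (r vᵢ)^*` in the Hilbert module `Aⁿ` (possible since `1 - t (G + e)` is
a strict contraction for `t = (∑ ‖vᵢ‖² + 2e)⁻¹`) and put `x = ∑ dᵢ vᵢ`. Then
`r x = ⟪x, x⟫ + e ⟪d, d⟫`, which forces `‖x‖ ≤ ‖r‖`, while `⟪x, vᵢ⟫` differs from `r vᵢ` by
`e dᵢ^*`, of norm at most `√e ‖r‖`. Letting `e → 0`, the right *-strict closure of the ball of
radius `C` of `M` is the ball of radius `C` of the `A`-dual. As the latter is closed for pointwise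
convergence and `A` is complete, bounded fundamental nets converge to functionals of the dual, and
self-duality says exactly that these limits are again elements of `M`.
-/

open scoped InnerProductSpace WithCStarModule

def dualBall (A : Type*) [CStarAlgebra A] (E : Type*) [NormedAddCommGroup E] [Module A E]
    (C : ℝ) : Set (E → A) :=
  {r | (∀ x y, r (x + y) = r x + r y) ∧ (∀ (a : A) x, r (a • x) = a • r x) ∧
    ∀ x, ‖r x‖ ≤ C * ‖x‖}

section dualBall

variable {A : Type*} [CStarAlgebra A] {E : Type*} [NormedAddCommGroup E] [Module A E]

lemma isBddModuleMap_of_mem_dualBall {r : E → A} {C : ℝ} (hr : r ∈ dualBall A E C) :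
    IsBddModuleMap A r :=
  ⟨hr.1, hr.2.1, C, hr.2.2⟩

lemma IsBddModuleMap.exists_mem_dualBall {r : E → A} (hr : IsBddModuleMap A r) :
    ∃ C, 0 ≤ C ∧ r ∈ dualBall A E C := by
  obtain ⟨hadd, hsmul, C, hC⟩ := hr
  exact ⟨max C 0, le_max_right C 0, hadd, hsmul, fun x =>
    (hC x).trans (mul_le_mul_of_nonneg_right (le_max_left C 0) (norm_nonneg x))⟩

lemma isClosed_dualBall (C : ℝ) : IsClosed (dualBall A E C) := by
  simp only [dualBall, Set.ofPred_and, Set.ofPred_forall]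
  refine .inter (isClosed_iInter fun x => isClosed_iInter fun y => ?_) (.inter
    (isClosed_iInter fun a => isClosed_iInter fun x => ?_) (isClosed_iInter fun x => ?_))
  · exact isClosed_eq (continuous_apply _) ((continuous_apply x).add (continuous_apply y))
  · exact isClosed_eq (continuous_apply _) ((continuous_apply x).const_smul a)
  · exact isClosed_le (continuous_apply x).norm continuous_const

lemma smul_mem_dualBall {r : E → A} {C s : ℝ} (hr : r ∈ dualBall A E C) (hs : 0 ≤ s) :
    s • r ∈ dualBall A E (s * C) := by
  obtain ⟨hadd, hsmul, hbound⟩ := hr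
  refine ⟨fun x y => by simp [hadd], fun a x => by simp [hsmul], fun x => ?_⟩
  rw [Pi.smul_apply, norm_smul, Real.norm_of_nonneg hs, mul_assoc]
  exact mul_le_mul_of_nonneg_left (hbound x) hs

end dualBall

lemma mem_closure_pi_of_forall_finset {X Y : Type*} [PseudoMetricSpace Y] {S : Set (X → Y)}
    {r : X → Y} (h : ∀ (F : Finset X) (ε : ℝ), 0 < ε → ∃ f ∈ S, ∀ x ∈ F, dist (f x) (r x) ≤ ε) :
    r ∈ closure S := by
  classical
  choose f hfS hf using h
  have hpos (n : ℕ) : (0 : ℝ) < 1 / (n + 1) := Nat.one_div_pos_of_nat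
  refine mem_closure_of_tendsto (f := fun p : Finset X × ℕ => f p.1 _ (hpos p.2))
    (tendsto_pi_nhds.2 fun x => Metric.tendsto_atTop.2 fun ε hε => ?_)
    (.of_forall fun p => hfS _ _ _)
  obtain ⟨n, hn⟩ := exists_nat_one_div_lt hε
  refine ⟨({x}, n), fun p hp => (hf _ _ _ x (Finset.singleton_subset_iff.1 hp.1)).trans_lt ?_⟩
  refine lt_of_le_of_lt (one_div_le_one_div_of_le (by positivity) ?_) hn
  exact_mod_cast Nat.succ_le_succ hp.2

namespace CStarModule

variable {A : Type*} [CStarAlgebra A] [PartialOrder A]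
  {E : Type*} [NormedAddCommGroup E] [Module ℂ E] [Module A E] {ι : Type*}

section linComb

variable [StarOrderedRing A] [IsScalarTower ℂ A E] [Fintype ι]

def linComb (v : ι → E) : C⋆ᵐᵒᵈ(A, ι → A) →ₗ[ℂ] E where
  toFun d := ∑ i, d i • v i
  map_add' d d' := by simp [add_smul, Finset.sum_add_distrib]
  map_smul' z d := by simp [Finset.smul_sum, smul_assoc]

lemma apply_linComb_eq_inner {r : E → A} {C : ℝ} (hr : r ∈ dualBall A E C) (v : ι → E)
    (d : C⋆ᵐᵒᵈ(A, ι → A)) :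
    r (linComb v d) = ⟪(WithCStarModule.equiv A (ι → A)).symm fun i => star (r (v i)), d⟫_A := by
  have hsum := map_sum (AddMonoidHom.mk' r hr.1) (fun i => d i • v i) Finset.univ
  simp only [AddMonoidHom.mk'_apply] at hsum
  simp [linComb, hsum, hr.2.1, WithCStarModule.pi_inner, WithCStarModule.inner_def]

end linComb

variable [CStarModule A E]

variable (A) in
noncomputable def innerVec (v : ι → E) : E →ₗ[ℂ] C⋆ᵐᵒᵈ(A, ι → A) :=
  (WithCStarModule.linearEquiv ℂ A (ι → A)).symm.toLinearMap ∘ₗ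
    LinearMap.pi fun i => innerₛₗ (v i)

@[simp]
lemma innerVec_apply (v : ι → E) (x : E) (i : ι) : innerVec A v x i = ⟪v i, x⟫_A :=
  rfl

variable (A) in
def toDual (x : E) : E → A :=
  fun y => ⟪x, y⟫_A

lemma toDual_ofReal_smul (s : ℝ) (x : E) : toDual A ((s : ℂ) • x) = s • toDual A x := by
  ext y
  simp [toDual, Complex.coe_smul]

variable [StarOrderedRing A]

lemma toDual_mem_dualBall {x : E} {C : ℝ} (hx : ‖x‖ ≤ C) : toDual A x ∈ dualBall A E C :=
  ⟨fun _ _ => inner_add_right, fun _ _ => inner_op_smul_right, fun y =>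
    (norm_inner_le E).trans (mul_le_mul_of_nonneg_right hx (norm_nonneg y))⟩

section Fintype

variable [Fintype ι]

lemma inner_innerVec_self_le (v : ι → E) (x : E) :
    ⟪innerVec A v x, innerVec A v x⟫_A ≤ (∑ i, ‖v i‖ ^ 2) • ⟪x, x⟫_A := by
  rw [WithCStarModule.pi_inner, Finset.sum_smul]
  refine Finset.sum_le_sum fun i _ => ?_
  rw [WithCStarModule.inner_def, innerVec_apply, star_inner]
  exact inner_mul_inner_swap_le (A := A) (E := E)

variable [IsScalarTower ℂ A E]

noncomputable def gram (v : ι → E) : C⋆ᵐᵒᵈ(A, ι → A) →ₗ[ℂ] C⋆ᵐᵒᵈ(A, ι → A) :=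
  innerVec A v ∘ₗ linComb v

lemma inner_innerVec (v : ι → E) (d : C⋆ᵐᵒᵈ(A, ι → A)) (x : E) :
    ⟪d, innerVec A v x⟫_A = ⟪linComb v d, x⟫_A := by
  simp [WithCStarModule.pi_inner, linComb, inner_sum_left, WithCStarModule.inner_def]

lemma inner_gram_self (v : ι → E) (d : C⋆ᵐᵒᵈ(A, ι → A)) :
    ⟪gram v d, d⟫_A = ⟪linComb v d, linComb v d⟫_A := by
  rw [← star_inner, gram, LinearMap.comp_apply, inner_innerVec, isSelfAdjoint_inner_self.star_eq]

lemma inner_smul_sub_gram_le (v : ι → E) (d : C⋆ᵐᵒᵈ(A, ι → A)) {q t : ℝ} (ht : 0 ≤ t)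
    (hqt : t * ∑ i, ‖v i‖ ^ 2 ≤ 2 * q) :
    ⟪(q : ℂ) • d - (t : ℂ) • gram v d, (q : ℂ) • d - (t : ℂ) • gram v d⟫_A ≤ q ^ 2 • ⟪d, d⟫_A := by
  set g := ⟪linComb v d, linComb v d⟫_A
  have h1 : ⟪d, gram v d⟫_A = g := inner_innerVec v d _
  have h2 : ⟪gram v d, d⟫_A = g := inner_gram_self v d
  have expand : ⟪(q : ℂ) • d - (t : ℂ) • gram v d, (q : ℂ) • d - (t : ℂ) • gram v d⟫_A
      = q ^ 2 • ⟪d, d⟫_A - (2 * q * t) • g + t ^ 2 • ⟪gram v d, gram v d⟫_A := by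
    simp only [inner_sub_left, inner_sub_right, inner_smul_left_complex (E := C⋆ᵐᵒᵈ(A, ι → A)),
      inner_smul_right_complex (E := C⋆ᵐᵒᵈ(A, ι → A))]
    simp only [Complex.star_def, Complex.conj_ofReal, Complex.coe_smul, h1, h2]
    module
  have hgram : t ^ 2 • ⟪gram v d, gram v d⟫_A ≤ (2 * q * t) • g :=
    calc t ^ 2 • ⟪gram v d, gram v d⟫_A ≤ t ^ 2 • (∑ i, ‖v i‖ ^ 2) • g := by
          gcongr; exact inner_innerVec_self_le v _
      _ ≤ (2 * q * t) • g := by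
          rw [smul_smul]
          exact smul_le_smul_of_nonneg_right (by nlinarith) inner_self_nonneg
  calc _ = _ := expand
    _ ≤ q ^ 2 • ⟪d, d⟫_A - (2 * q * t) • g + (2 * q * t) • g := by gcongr
    _ = q ^ 2 • ⟪d, d⟫_A := sub_add_cancel _ _

lemma norm_smul_sub_gram_le (v : ι → E) (d : C⋆ᵐᵒᵈ(A, ι → A)) {q t : ℝ} (hq : 0 ≤ q)
    (ht : 0 ≤ t) (hqt : t * ∑ i, ‖v i‖ ^ 2 ≤ 2 * q) :
    ‖(q : ℂ) • d - (t : ℂ) • gram v d‖ ≤ q * ‖d‖ := by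
  rw [← pow_le_pow_iff_left₀ (norm_nonneg _) (by positivity) two_ne_zero, mul_pow, norm_sq_eq A,
    norm_sq_eq A]
  calc _ ≤ ‖q ^ 2 • ⟪d, d⟫_A‖ := CStarAlgebra.norm_le_norm_of_nonneg_of_le inner_self_nonneg
        (inner_smul_sub_gram_le v d ht hqt)
    _ = q ^ 2 * ‖⟪d, d⟫_A‖ := by rw [norm_smul, Real.norm_of_nonneg (sq_nonneg q)]

lemma exists_gram_add_smul_eq (v : ι → E) {e : ℝ} (he : 0 < e) (b : C⋆ᵐᵒᵈ(A, ι → A)) :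
    ∃ d, gram v d + (e : ℂ) • d = b := by
  set L := ∑ i, ‖v i‖ ^ 2
  set t := (L + 2 * e)⁻¹
  have ht : 0 < t := by positivity
  have htL : t * (L + 2 * e) = 1 := inv_mul_cancel₀ (by positivity)
  have hte : 0 < t * e := by positivity
  set q := 1 - t * e
  have hq : 0 ≤ q := by nlinarith [show 0 ≤ L by positivity]
  have hqt : t * L ≤ 2 * q := by linarith
  let S : C⋆ᵐᵒᵈ(A, ι → A) →L[ℂ] C⋆ᵐᵒᵈ(A, ι → A) :=
    LinearMap.mkContinuous ((q : ℂ) • LinearMap.id - (t : ℂ) • gram v) q fun d => by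
      rw [LinearMap.sub_apply, LinearMap.smul_apply, LinearMap.smul_apply, LinearMap.id_apply]
      exact norm_smul_sub_gram_le v d hq ht.le hqt
  have hS : ‖S‖ < 1 := (LinearMap.mkContinuous_norm_le _ hq _).trans_lt (by linarith)
  obtain ⟨y, rfl⟩ :=
    (ContinuousLinearMap.isUnit_iff_bijective.mp (isUnit_one_sub_of_norm_lt_one hS)).2 b
  refine ⟨(t : ℂ) • y, ?_⟩
  simp only [S, q, map_smul, sub_apply, one_apply_eq_self, LinearMap.mkContinuous_apply,
    LinearMap.sub_apply, LinearMap.smul_apply, LinearMap.id_apply]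
  push_cast
  module

lemma exists_norm_le_norm_inner_sub_le {r : E → A} {C : ℝ} (hC : 0 ≤ C)
    (hr : r ∈ dualBall A E C) (v : ι → E) {e : ℝ} (he : 0 < e) :
    ∃ x : E, ‖x‖ ≤ C ∧ ∀ i, ‖⟪x, v i⟫_A - r (v i)‖ ≤ √e * C := by
  set b : C⋆ᵐᵒᵈ(A, ι → A) := (WithCStarModule.equiv A (ι → A)).symm fun i => star (r (v i))
  obtain ⟨d, hd⟩ := exists_gram_add_smul_eq v he b
  set x := linComb v d
  set s := ⟪x, x⟫_A + e • ⟪d, d⟫_A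
  have hrx : r x = s := by
    rw [apply_linComb_eq_inner hr]
    change ⟪b, d⟫_A = s
    rw [← hd, inner_add_left, inner_gram_self,
      inner_smul_left_complex (E := C⋆ᵐᵒᵈ(A, ι → A))]
    simp only [Complex.star_def, Complex.conj_ofReal, Complex.coe_smul]
    rfl
  have hs : ‖s‖ ≤ C * ‖x‖ := hrx ▸ hr.2.2 x
  have hx : ‖x‖ ^ 2 ≤ ‖s‖ := by
    rw [norm_sq_eq A]
    exact CStarAlgebra.norm_le_norm_of_nonneg_of_le inner_self_nonneg
      (le_add_of_nonneg_right (smul_nonneg he.le inner_self_nonneg))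
  have hde : e * ‖d‖ ^ 2 ≤ ‖s‖ := by
    rw [norm_sq_eq A, ← Real.norm_of_nonneg he.le, ← norm_smul]
    exact CStarAlgebra.norm_le_norm_of_nonneg_of_le (smul_nonneg he.le inner_self_nonneg)
      (le_add_of_nonneg_left inner_self_nonneg)
  have hxC : ‖x‖ ≤ C := by nlinarith [norm_nonneg x]
  refine ⟨x, hxC, fun i => ?_⟩
  have herr : ⟪x, v i⟫_A - r (v i) = -star (((e : ℂ) • d) i) := by
    rw [← star_inner, ← innerVec_apply,
      show innerVec A v x = b - (e : ℂ) • d from eq_sub_of_add_eq hd, WithCStarModule.sub_apply,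
      star_sub]
    change star (star (r (v i))) - _ - r (v i) = _
    rw [star_star, sub_sub_cancel_left]
  rw [herr, norm_neg, norm_star]
  refine (WithCStarModule.norm_apply_le_norm _ i).trans ?_
  rw [← pow_le_pow_iff_left₀ (norm_nonneg _) (by positivity) two_ne_zero, norm_smul,
    Complex.norm_of_nonneg he.le, mul_pow, mul_pow, Real.sq_sqrt he.le, pow_two e, mul_assoc]
  exact mul_le_mul_of_nonneg_left (by nlinarith) he.le

end Fintype

lemma closure_toDual_image_subset_dualBall (C : ℝ) :
    closure (toDual A '' {x : E | ‖x‖ ≤ C}) ⊆ dualBall A E C :=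
  closure_minimal (Set.image_subset_iff.2 fun _ hx => toDual_mem_dualBall hx) (isClosed_dualBall C)

lemma exists_mem_dualBall_tendsto_of_cauchy {l : Filter E} [l.NeBot] {C : ℝ}
    (hl : l ≤ 𝓟 {x | ‖x‖ ≤ C}) (hcau : ∀ y, Cauchy (l.map fun x => ⟪x, y⟫_A)) :
    ∃ r ∈ dualBall A E C, ∀ y, Tendsto (fun x => ⟪x, y⟫_A) l (𝓝 (r y)) := by
  obtain ⟨r, hr⟩ := CompleteSpace.complete ((cauchy_pi_iff' _).2 hcau : Cauchy (l.map (toDual A)))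
  refine ⟨r, closure_toDual_image_subset_dualBall C (mem_closure_of_tendsto hr ?_),
    tendsto_pi_nhds.1 hr⟩
  exact mem_of_superset (le_principal_iff.1 hl) fun x hx => Set.mem_image_of_mem _ hx

variable [IsScalarTower ℂ A E]

lemma dualBall_subset_closure_toDual_image {C : ℝ} (hC : 0 ≤ C) :
    dualBall A E C ⊆ closure (toDual A '' {x : E | ‖x‖ ≤ C}) := by
  intro r hr
  refine mem_closure_pi_of_forall_finset fun F ε hε => ?_
  obtain ⟨x, hx, hxF⟩ := exists_norm_le_norm_inner_sub_le hC hr (fun y : F => (y : E))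
    (e := (ε / (C + 1)) ^ 2) (by positivity)
  refine ⟨toDual A x, ⟨x, hx, rfl⟩, fun y hy => ?_⟩
  rw [dist_eq_norm]
  calc _ ≤ √((ε / (C + 1)) ^ 2) * C := hxF ⟨y, hy⟩
    _ ≤ ε := by
      rw [Real.sqrt_sq (by positivity), div_mul_eq_mul_div, div_le_iff₀ (by positivity)]
      nlinarith

lemma exists_filter_tendsto_of_mem_dualBall {r : E → A} {C : ℝ} (hC : 0 ≤ C)
    (hr : r ∈ dualBall A E C) :
    ∃ l : Filter E, l.NeBot ∧ l ≤ 𝓟 {x | ‖x‖ ≤ C} ∧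
      ∀ y, Tendsto (fun x => ⟪x, y⟫_A) l (𝓝 (r y)) := by
  have : MapClusterPt r (𝓟 {x : E | ‖x‖ ≤ C}) (toDual A) := by
    rw [MapClusterPt, map_principal, ← mem_closure_iff_clusterPt]
    exact dualBall_subset_closure_toDual_image hC hr
  obtain ⟨U, hU, hlim⟩ := mapClusterPt_iff_ultrafilter.1 this
  exact ⟨U, inferInstance, hU, tendsto_pi_nhds.1 hlim⟩

lemma exists_eq_inner_of_ball_complete
    (hcomp : ∀ l : Filter E, l.NeBot → l ≤ 𝓟 {x | ‖x‖ ≤ 1} →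
      (∀ y, Cauchy (l.map fun x => ⟪x, y⟫_A)) →
      ∃ x₀ : E, ∀ y, Tendsto (fun x => ⟪x, y⟫_A) l (𝓝 ⟪x₀, y⟫_A))
    {r : E → A} {C : ℝ} (hC : 0 ≤ C) (hr : r ∈ dualBall A E C) :
    ∃ x : E, ∀ y, r y = ⟪x, y⟫_A := by
  set s := (C + 1)⁻¹
  have hs : 0 < s := by positivity
  have hsC : s * C ≤ 1 := by rw [inv_mul_le_iff₀ (by positivity)]; linarith
  obtain ⟨l, hl, hball, hlim⟩ :=
    exists_filter_tendsto_of_mem_dualBall (by positivity) (smul_mem_dualBall hr hs.le)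
  obtain ⟨x₀, hx₀⟩ := hcomp l hl (hball.trans (principal_mono.2 fun x hx => hx.trans hsC))
    fun y => (hlim y).cauchy_map
  refine ⟨((C + 1 : ℝ) : ℂ) • x₀, fun y => ?_⟩
  rw [← toDual, toDual_ofReal_smul, Pi.smul_apply, toDual, ← tendsto_nhds_unique (hlim y) (hx₀ y),
    Pi.smul_apply, smul_smul, mul_inv_cancel₀ (by positivity), one_smul]

end CStarModule

namespace LeftHilbertModule

variable {A : Type*} [CStarAlgebra A] [PartialOrder A] [StarOrderedRing A]
  {M : Type*} [NormedAddCommGroup M] [Module A M] [Module ℂ M] [IsScalarTower ℂ A M]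

/-- Mathlib's Hilbert C⋆-modules have their inner product `A`-linear in the second variable, hence
the swap. -/
abbrev toCStarModule (h : LeftHilbertModule A M) : CStarModule A M where
  inner x y := h.inner y x
  inner_add_right := h.inner_add_left _ _ _
  inner_self_nonneg {x} := by
    obtain ⟨a, ha⟩ := h.inner_self_nonneg x
    exact ha ▸ star_mul_self_nonneg a
  inner_self {x} := ⟨h.eq_zero_of_inner_self x, fun hx => hx ▸ h.inner_zero_left 0⟩
  inner_op_smul_right := h.inner_smul_left _ _ _
  inner_smul_right_complex {z x y} := by
    rw [← one_smul A y, ← smul_assoc, h.inner_smul_left, h.inner_smul_left, one_mul,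
      smul_one_mul]
  star_inner x y := h.star_inner y x
  norm_eq_sqrt_norm_inner_self x := h.norm_eq x

end LeftHilbertModule

open CStarModule in
theorem selfDual_iff_ball_strictly_complete_general
    {A : Type*} [CStarAlgebra A]
    {M : Type*} [NormedAddCommGroup M] [Module A M]
    (h : LeftHilbertModule A M) :
    (h.SelfDual ↔
      ∀ l : Filter M, l.NeBot → l ≤ Filter.principal {x : M | ‖x‖ ≤ 1} →
        (∀ y : M, Cauchy (l.map (fun x : M => h.inner y x))) →
        ∃ x₀ : M, ∀ y : M,
          Filter.Tendsto (fun x : M => h.inner y x) l (nhds (h.inner y x₀))) ∧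
    (∀ r : M → A, IsBddModuleMap A r →
      ∃ (l : Filter M) (C : ℝ), l.NeBot ∧ l ≤ Filter.principal {x : M | ‖x‖ ≤ C} ∧
        ∀ y : M, Filter.Tendsto (fun x : M => h.inner y x) l (nhds (r y))) ∧
    (∀ (l : Filter M) (C : ℝ), l.NeBot → l ≤ Filter.principal {x : M | ‖x‖ ≤ C} →
      (∀ y : M, Cauchy (l.map (fun x : M => h.inner y x))) →
      ∃ r : M → A, IsBddModuleMap A r ∧
        ∀ y : M, Filter.Tendsto (fun x : M => h.inner y x) l (nhds (r y))) := by
  let := CStarAlgebra.spectralOrder A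
  have := CStarAlgebra.spectralOrderedRing A
  let : Module ℂ M := .compHom M (algebraMap ℂ A)
  have : IsScalarTower ℂ A M := .of_algebraMap_smul fun _ _ => rfl
  let := h.toCStarModule
  refine ⟨⟨fun hsd l hl hball hcau => ?_, fun hcomp r hr => ?_⟩, fun r hr => ?_,
    fun l C hl hball hcau => ?_⟩
  · obtain ⟨r, hr, hlim⟩ := exists_mem_dualBall_tendsto_of_cauchy (l := l) hball hcau
    obtain ⟨x₀, hx₀⟩ := hsd r (isBddModuleMap_of_mem_dualBall hr)
    exact ⟨x₀, fun y => hx₀ y ▸ hlim y⟩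
  · obtain ⟨C, hC, hrC⟩ := hr.exists_mem_dualBall
    exact exists_eq_inner_of_ball_complete hcomp hC hrC
  · obtain ⟨C, hC, hrC⟩ := hr.exists_mem_dualBall
    obtain ⟨l, hl⟩ := exists_filter_tendsto_of_mem_dualBall hC hrC
    exact ⟨l, C, hl⟩
  · obtain ⟨r, hr, hlim⟩ := exists_mem_dualBall_tendsto_of_cauchy (l := l) hball hcau
    exact ⟨r, isBddModuleMap_of_mem_dualBall hr, hlim⟩

/-- A Hilbert C*-module `M` is self-dual iff its unit ball is
complete with respect to the right *-strict topology (formulated via filters,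
playing the role of nets: every nonzero filter supported in the unit ball all
of whose inner-product images are Cauchy converges right *-strictly to an
element of `M`).  Moreover, the `A`-dual `M'` is the linear hull of the right
*-strict completion of the unit ball: every bounded module functional is the
right *-strict limit of a norm-bounded net from `M`, and every norm-bounded
right *-strictly fundamental net converges to a bounded module functional. -/
theorem selfDual_iff_ball_strictly_complete
    {A : Type*} [CStarAlgebra A]
    {M : Type*} [NormedAddCommGroup M] [Module A M] [CompleteSpace M]
    (h : LeftHilbertModule A M) :
    (h.SelfDual ↔
      ∀ l : Filter M, l.NeBot → l ≤ Filter.principal {x : M | ‖x‖ ≤ 1} →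
        (∀ y : M, Cauchy (l.map (fun x : M => h.inner y x))) →
        ∃ x₀ : M, ∀ y : M,
          Filter.Tendsto (fun x : M => h.inner y x) l (nhds (h.inner y x₀))) ∧
    (∀ r : M → A, IsBddModuleMap A r →
      ∃ (l : Filter M) (C : ℝ), l.NeBot ∧ l ≤ Filter.principal {x : M | ‖x‖ ≤ C} ∧
        ∀ y : M, Filter.Tendsto (fun x : M => h.inner y x) l (nhds (r y))) ∧
    (∀ (l : Filter M) (C : ℝ), l.NeBot → l ≤ Filter.principal {x : M | ‖x‖ ≤ C} →
      (∀ y : M, Cauchy (l.map (fun x : M => h.inner y x))) →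
      ∃ r : M → A, IsBddModuleMap A r ∧
        ∀ y : M, Filter.Tendsto (fun x : M => h.inner y x) l (nhds (r y))) :=
  selfDual_iff_ball_strictly_complete_general h
end

section
/- Let A be a C*-algebra and D a norm-closed left ideal of A, regarded as a Hilbert A-module with the standard inner product ⟨a,b⟩_A = a·b*. Then D is self-dual if and only if there exists a projection p ∈ A such that D = Ap and p ∈ D. -/
open Filter Topology

/- A projection `p ∈ D` with `D = A p` acts as a right unit on `D`, so every bounded
module map `r : D → A` is `y ↦ y r(p) = ⟨y, r(p)* p⟩`. Conversely, self-duality represents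
the inclusion `D → A` as `y ↦ y x*` for some `x ∈ D`; taking `y = x` gives `x = x x*`,
which forces `x` to be a projection. -/

section StarMul

variable {R : Type*} [Mul R] [StarMul R] {x : R}

lemma isSelfAdjoint_of_eq_mul_star (h : x = x * star x) : IsSelfAdjoint x := by
  rw [IsSelfAdjoint, h, star_mul, star_star]

lemma isIdempotentElem_of_eq_mul_star (h : x = x * star x) : IsIdempotentElem x := by
  calc x * x = x * star x := by rw [(isSelfAdjoint_of_eq_mul_star h).star_eq]
    _ = x := h.symm

end StarMul

lemma Submodule.coe_eq_setOf_mul_iff {R : Type*} [Semiring R] (D : Submodule R R) {p : R}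
    (hp : IsIdempotentElem p) (hpD : p ∈ D) :
    (D : Set R) = {x | ∃ a, x = a * p} ↔ ∀ y ∈ D, y * p = y := by
  constructor
  · intro hD y hy
    obtain ⟨a, rfl⟩ : ∃ a, y = a * p := by rwa [← SetLike.mem_coe, hD] at hy
    rw [mul_assoc, hp.eq]
  · intro hunit
    ext y
    refine ⟨fun hy => ⟨y, (hunit y hy).symm⟩, ?_⟩
    rintro ⟨a, rfl⟩
    exact D.smul_mem a hpD

lemma apply_eq_mul_apply_of_mul_eq_self {R : Type*} [Semiring R] {D : Submodule R R}
    {r : D → R} (hr : ∀ (a : R) (x : D), r (a • x) = a • r x) {p : R} (hpD : p ∈ D)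
    (hunit : ∀ y ∈ D, y * p = y) (y : D) : r y = y * r ⟨p, hpD⟩ := by
  have hy : (y : R) • (⟨p, hpD⟩ : D) = y := Subtype.ext (hunit y y.2)
  rw [← hy, hr, smul_eq_mul, hy]

section CStarAlgebra

variable {A : Type*} [CStarAlgebra A]

lemma exists_eq_mul_star_of_selfDual {D : Submodule A A}
    (hsd : ((selfModule A).restrict D).SelfDual) :
    ∃ x ∈ D, ∀ y ∈ D, y = y * star x := by
  have hincl : IsBddModuleMap A (fun y : D => (y : A)) :=
    ⟨fun _ _ => rfl, fun _ _ => rfl, 1, fun y => by simp⟩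
  obtain ⟨x, hx⟩ := hsd _ hincl
  exact ⟨x, x.2, fun y hy => hx ⟨y, hy⟩⟩

lemma selfDual_of_mul_eq_self {D : Submodule A A} {p : A} (hp : IsSelfAdjoint p)
    (hpD : p ∈ D) (hunit : ∀ y ∈ D, y * p = y) :
    ((selfModule A).restrict D).SelfDual := by
  intro r hr
  refine ⟨⟨star (r ⟨p, hpD⟩) * p, D.smul_mem _ hpD⟩, fun y => ?_⟩
  change r y = (y : A) * star (star (r ⟨p, hpD⟩) * p)
  rw [apply_eq_mul_apply_of_mul_eq_self hr.2.1 hpD hunit, star_mul, star_star, hp.star_eq,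
    ← mul_assoc, hunit y y.2]

end CStarAlgebra

theorem ideal_selfDual_iff_projection_general
    {A : Type*} [CStarAlgebra A]
    (D : Submodule A A) :
    ((selfModule A).restrict D).SelfDual ↔
      ∃ p : A, IsSelfAdjoint p ∧ IsIdempotentElem p ∧ p ∈ D ∧
        (D : Set A) = {x : A | ∃ a : A, x = a * p} := by
  constructor
  · intro hsd
    obtain ⟨x, hxD, hx⟩ := exists_eq_mul_star_of_selfDual hsd
    have hsa := isSelfAdjoint_of_eq_mul_star (hx x hxD)
    have hid := isIdempotentElem_of_eq_mul_star (hx x hxD)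
    refine ⟨x, hsa, hid, hxD, (D.coe_eq_setOf_mul_iff hid hxD).2 fun y hy => ?_⟩
    rw [← hsa.star_eq, ← hx y hy]
  · rintro ⟨p, hsa, hid, hpD, hD⟩
    exact selfDual_of_mul_eq_self hsa hpD ((D.coe_eq_setOf_mul_iff hid hpD).1 hD)

/-- A norm-closed left ideal `D` of a C*-algebra `A`,
regarded as a Hilbert `A`-module with the standard inner product
`⟨a,b⟩ = a b*`, is self-dual iff there is a projection `p ∈ A` with `D = Ap`
and `p ∈ D`. -/
theorem ideal_selfDual_iff_projection
    {A : Type*} [CStarAlgebra A]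
    (D : Submodule A A) (hD : IsClosed (D : Set A)) :
    ((selfModule A).restrict D).SelfDual ↔
      ∃ p : A, IsSelfAdjoint p ∧ IsIdempotentElem p ∧ p ∈ D ∧
        (D : Set A) = {x : A | ∃ a : A, x = a * p} :=
  ideal_selfDual_iff_projection_general D
end
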